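/- Let F₂ be the free group on generators g and h, and let p ≥ 3. Suppose A = {v₁gᵖv₁', ..., v_{n₁}gᵖv_{n₁}'} and B = {u₁hᵖu₁', ..., u_{n₂}hᵖu_{n₂}'} are sets of reduced words in F₂ such that each vᵢ, vᵢ', uᵢ, uᵢ' is an alternating word in g^{±1} and h^{±1} (each letter has exponent ±1, consecutive letters alternate between the g-letter and the h-letter), each vᵢ ends with h^{±1}, each vᵢ' begins with h^{±1}, each uᵢ ends with g^{±1}, each uᵢ' begins with g^{±1}, and L(v_{i+1}) > L(vᵢ), L(v_{i+1}') > L(vᵢ'), L(u_{i+1}) > L(uᵢ), L(u_{i+1}') > L(uᵢ') for all applicable i. Then any nonempty reduced word in the elements of A ∪ B and their inverses is not equal to the identity of F₂. -/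

import Mathlib

/-!
Statement 1 (word lemma 2, Lemma 3.2 of the paper).

`F₂` is the free group on generators `g = of 0`, `h = of 1`.
"Alternating word in `g^{±1}` and `h^{±1}`" means that in the reduced word consecutive
letters alternate between the `g`-letter and the `h`-letter (each letter has exponent ±1
automatically, since same-generator neighbours are forbidden); such a word may be empty
(matching `v₁ = u₁ = e` in the paper).
The conclusion "every nonempty reduced word in `A ∪ B` and inverses is ≠ e" is expressed
via the lift from the free group on `Fin n₁ ⊕ Fin n₂`.
-/

namespace Stmt1

abbrev F2 := FreeGroup (Fin 2)

def g : F2 := FreeGroup.of 0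
def h : F2 := FreeGroup.of 1

/-- a reduced word whose letters strictly alternate between `g^{±1}` and `h^{±1}`. -/
def Alternating (w : F2) : Prop :=
  List.Chain' (fun a b : Fin 2 × Bool => a.1 ≠ b.1) w.toWord

def EndsWith (x : Fin 2) (w : F2) : Prop :=
  w.toWord = [] ∨ w.toWord.getLast?.map Prod.fst = some x

def StartsWith (x : Fin 2) (w : F2) : Prop :=
  w.toWord = [] ∨ w.toWord.head?.map Prod.fst = some x

end Stmt1

/-!
Ping-pong. Each generator `a i = A c^p B` is a reduced word with an alternating prefix `A`,
an alternating suffix `B` and a positive power `c^p` of `g` or `h` in between. Let `X i` be the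
elements whose reduced word starts with `A c c` and `Y i` those starting with `B⁻¹ c⁻¹ c⁻¹`.
If `w ∉ Y i`, at most `B` and one letter `c` cancel in `a i * w`, so `p ≥ 3` leaves `A c c` at
the front: `a i` maps the complement of `Y i` into `X i`, and `(a i)⁻¹` the complement of `X i`
into `Y i`. These sets are pairwise disjoint because `A c c` can be a prefix of an alternating
word followed by `c' c'` only if it is the whole word, and the lengths of the `A`s (and of
the `B`s) belonging to the same generator are pairwise different.
-/

open Function
open scoped Pointwise

universe u

namespace FreeGroup

theorem injective_lift_of_subsingleton {ι G : Type*} [Subsingleton ι] [Group G] (a : ι → G)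
    (ha : ∀ i, ¬IsOfFinOrder (a i)) : Injective (lift a) := by
  rw [injective_iff_map_eq_one]
  intro w hw
  cases isEmpty_or_nonempty ι with
  | inl _ => exact Subsingleton.elim _ _
  | inr hι =>
    have := uniqueOfSubsingleton hι.some
    obtain ⟨n, rfl⟩ : ∃ n : ℤ, of default ^ n = w := ⟨_, equivIntOfUnique.left_inv w⟩
    rw [map_zpow, lift_apply_of] at hw
    obtain rfl : n = 0 := by
      by_contra hn
      exact ha default (isOfFinOrder_iff_zpow_eq_one.2 ⟨n, hn, hw⟩)
    exact zpow_zero _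

section PingPong

variable {G : Type u} {β : Type*} [Group G] [MulAction G β]

theorem not_isOfFinOrder_of_ping_pong {a : G} {X Y : Set β} {x₀ : β} (hX : a • Yᶜ ⊆ X)
    (hXY : Disjoint X Y) (hx₀X : x₀ ∉ X) (hx₀Y : x₀ ∉ Y) : ¬IsOfFinOrder a := by
  have hpow : ∀ n : ℕ, a ^ (n + 1) • x₀ ∈ X := by
    intro n
    induction n with
    | zero => simpa using hX (Set.smul_mem_smul_set (a := a) hx₀Y)
    | succ n ih =>
      rw [pow_succ', mul_smul]
      exact hX (Set.smul_mem_smul_set (hXY.notMem_of_mem_left ih))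
  rintro ⟨n, hn, hper⟩
  obtain ⟨m, rfl⟩ := Nat.exists_eq_succ_of_ne_zero hn.ne'
  exact hx₀X (by simpa [(isPeriodicPt_mul_iff_pow_eq_one a).1 hper] using hpow m)

/-- `x₀` replaces the hypothesis `Nontrivial ι` of `FreeGroup.injective_lift_of_ping_pong`:
its orbit shows that a single generator has infinite order. -/
theorem injective_lift_of_ping_pong_of_notMem {ι : Type u} (a : ι → G) (X Y : ι → Set β)
    (x₀ : β) (hx₀X : ∀ i, x₀ ∉ X i) (hx₀Y : ∀ i, x₀ ∉ Y i)
    (hXdisj : Pairwise (Disjoint on X)) (hYdisj : Pairwise (Disjoint on Y))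
    (hXYdisj : ∀ i j, Disjoint (X i) (Y j))
    (hX : ∀ i, a i • (Y i)ᶜ ⊆ X i) (hY : ∀ i, a⁻¹ i • (X i)ᶜ ⊆ Y i) :
    Injective (lift a) := by
  rcases subsingleton_or_nontrivial ι with _ | _
  · exact injective_lift_of_subsingleton a fun i =>
      not_isOfFinOrder_of_ping_pong (hX i) (hXYdisj i i) (hx₀X i) (hx₀Y i)
  · exact injective_lift_of_ping_pong a X Y
      (fun i => ⟨_, hX i (Set.smul_mem_smul_set (hx₀Y i))⟩) hXdisj hYdisj hXYdisj hX hY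

end PingPong

section Words

open List

variable {α : Type*}

theorem invRev_prefix_of_suffix {L₁ L₂ : List (α × Bool)} (h : L₁ <:+ L₂) :
    invRev L₁ <+: invRev L₂ := by
  obtain ⟨T, rfl⟩ := h
  exact ⟨invRev T, invRev_append.symm⟩

def IsAlternating (L : List (α × Bool)) : Prop :=
  L.IsChain fun a b => a.1 ≠ b.1

theorem IsAlternating.isReduced {L : List (α × Bool)} (h : IsAlternating L) : IsReduced L :=
  h.imp fun _ _ hab heq => absurd heq hab

theorem isAlternating_invRev {L : List (α × Bool)} :
    IsAlternating (invRev L) ↔ IsAlternating L := by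
  simp only [IsAlternating, invRev, isChain_reverse, isChain_map]
  exact ⟨fun h => h.imp fun _ _ => Ne.symm, fun h => h.imp fun _ _ => Ne.symm⟩

theorem not_prefix_of_isAlternating {D D' : List (α × Bool)} {c c' : α × Bool}
    (hD' : IsAlternating (D' ++ [c'])) (hne : (D.length, c) ≠ (D'.length, c')) :
    ¬D ++ [c, c] <+: D' ++ [c', c'] := by
  rw [show D' ++ [c', c'] = D' ++ [c'] ++ [c'] by simp, prefix_concat_iff]
  rintro (heq | hpre)
  · have hlen : D.length = D'.length := by simpa using congrArg length heq
    obtain ⟨-, hcc⟩ := append_inj (by simpa using heq) hlen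
    exact hne (by simp_all)
  · have : IsAlternating [c, c] := hD'.infix ((suffix_append D [c, c]).isInfix.trans hpre.isInfix)
    exact (isChain_pair.1 this) rfl

variable [DecidableEq α]

theorem exists_reduce_append_eq : ∀ {L W : List (α × Bool)}, IsReduced L → IsReduced W →
    ∃ L₁ M W₂, L = L₁ ++ M ∧ W = invRev M ++ W₂ ∧ reduce (L ++ W) = L₁ ++ W₂
  | [], W, _, hW => ⟨[], [], W, rfl, rfl, hW.reduce_eq⟩
  | x :: L, W, hL, hW => by
    obtain ⟨L₁, M, W₂, rfl, rfl, hred⟩ :=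
      exists_reduce_append_eq (hL.infix (suffix_cons x _).isInfix) hW
    rw [cons_append, reduce.cons, hred]
    rcases L₁ with _ | ⟨z, L₁⟩
    · rcases W₂ with _ | ⟨y, W₂⟩
      · exact ⟨[x], M, [], rfl, rfl, rfl⟩
      by_cases hxy : x.1 = y.1 ∧ x.2 = !y.2
      · refine ⟨[], x :: M, W₂, rfl, ?_, by simp [hxy]⟩
        have hy : y = (x.1, !x.2) := Prod.ext hxy.1.symm (by simp [hxy.2])
        simp [hy, invRev]
      · exact ⟨[x], M, y :: W₂, rfl, rfl, by simp [hxy]⟩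
    · have hxz : ¬(x.1 = z.1 ∧ x.2 = !z.2) := by
        rintro ⟨h₁, h₂⟩
        have := (isReduced_cons_cons.1 hL).1 h₁
        simp_all
      exact ⟨x :: z :: L₁, M, W₂, rfl, rfl, by simp [hxz]⟩

theorem exists_toWord_mul_eq (x y : FreeGroup α) :
    ∃ L M R, x.toWord = L ++ M ∧ y.toWord = invRev M ++ R ∧ (x * y).toWord = L ++ R := by
  rw [toWord_mul]
  exact exists_reduce_append_eq isReduced_toWord isReduced_toWord

theorem toWord_mul_of_pow_mul {a b : FreeGroup α} {c : α} {p : ℕ} (hp : p ≠ 0)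
    (ha : IsReduced (a.toWord ++ [(c, true)])) (hb : IsReduced ((c, true) :: b.toWord)) :
    (a * of c ^ p * b).toWord = a.toWord ++ replicate p (c, true) ++ b.toWord := by
  have hmk : a * of c ^ p * b = mk (a.toWord ++ replicate p (c, true) ++ b.toWord) := by
    conv_lhs => rw [← mk_toWord (x := a), ← mk_toWord (x := b), ← mk_toWord (x := of c ^ p),
      toWord_of_pow, mul_mk, mul_mk]
  rw [hmk, toWord_mk, IsReduced.reduce_eq]
  rw [← flatten_replicate_singleton]
  exact IsReduced.append_flatten_replicate_append IsCyclicallyReduced.singleton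
    (ha.append_overlap hb (cons_ne_nil _ _)) hp

end Words

section Cylinders

open List

variable {α : Type u} [DecidableEq α]

def cylinder (P : List (α × Bool)) : Set (FreeGroup α) := {z | P <+: z.toWord}

theorem one_notMem_cylinder {P : List (α × Bool)} (hP : P ≠ []) : 1 ∉ cylinder P := by
  simpa [cylinder] using hP

theorem disjoint_cylinder {D D' : List (α × Bool)} {c c' : α × Bool}
    (hD : IsAlternating (D ++ [c])) (hD' : IsAlternating (D' ++ [c']))
    (hne : (D.length, c) ≠ (D'.length, c')) :
    Disjoint (cylinder (D ++ [c, c])) (cylinder (D' ++ [c', c'])) := by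
  rw [Set.disjoint_left]
  intro z h h'
  rcases prefix_or_prefix_of_prefix h h' with hpre | hpre
  · exact not_prefix_of_isAlternating hD' hne hpre
  · exact not_prefix_of_isAlternating hD hne.symm hpre

/-- Unless `w` starts by cancelling `c c B`, at most `B` and one `c` cancel in `x * w`,
so `x * w` still starts with `A c c`. -/
theorem mul_mem_cylinder {x w : FreeGroup α} {A B : List (α × Bool)} {c : α × Bool} {p : ℕ}
    (hp : 3 ≤ p) (hx : x.toWord = A ++ replicate p c ++ B)
    (hw : w ∉ cylinder (invRev ([c, c] ++ B))) : x * w ∈ cylinder (A ++ [c, c]) := by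
  obtain ⟨q, rfl⟩ : ∃ q, p = q + 2 := ⟨p - 2, by omega⟩
  obtain ⟨L, M, R, hxLM, hwMR, hxw⟩ := exists_toWord_mul_eq x w
  have hlen : L.length + M.length = A.length + (q + 2) + B.length := by
    rw [← length_append, ← hxLM, hx]; simp [Nat.add_assoc]
  by_cases hM : M.length ≤ B.length + 1
  · have hA : A ++ [c, c] <+: x.toWord := ⟨replicate q c ++ B, by simp [hx, replicate_succ]⟩
    show A ++ [c, c] <+: (x * w).toWord
    rw [hxw]
    refine (prefix_of_prefix_length_le hA (hxLM ▸ prefix_append L M) ?_).trans (prefix_append L R)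
    simp; omega
  · have hB : [c, c] ++ B <:+ x.toWord := ⟨A ++ replicate q c, by simp [hx, replicate_add]⟩
    have hBM : [c, c] ++ B <:+ M :=
      suffix_of_suffix_length_le hB (hxLM ▸ suffix_append L M) (by simp; omega)
    exact absurd (show _ <+: w.toWord from
      hwMR ▸ (invRev_prefix_of_suffix hBM).trans (prefix_append _ R)) hw

theorem injective_lift_of_toWord_eq_append_replicate_append {ι : Type u} {p : ℕ} (hp : 3 ≤ p)
    (a : ι → FreeGroup α) (A B : ι → List (α × Bool)) (c : ι → α)
    (ha : ∀ i, (a i).toWord = A i ++ replicate p (c i, true) ++ B i)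
    (hA : ∀ i, IsAlternating (A i ++ [(c i, true)]))
    (hB : ∀ i, IsAlternating ((c i, true) :: B i))
    (hAc : Injective fun i => ((A i).length, c i)) (hBc : Injective fun i => ((B i).length, c i)) :
    Injective (lift a) := by
  have hB' : ∀ i, IsAlternating (invRev (B i) ++ [(c i, false)]) := fun i => by
    simpa [invRev] using isAlternating_invRev.2 (hB i)
  refine injective_lift_of_ping_pong_of_notMem a
    (fun i => cylinder (A i ++ [(c i, true), (c i, true)]))
    (fun i => cylinder (invRev (B i) ++ [(c i, false), (c i, false)])) 1
    (fun i => one_notMem_cylinder (by simp)) (fun i => one_notMem_cylinder (by simp))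
    (fun i j hij => disjoint_cylinder (hA i) (hA j) (by simpa using hAc.ne hij))
    (fun i j hij => disjoint_cylinder (hB' i) (hB' j) (by simpa using hBc.ne hij))
    (fun i j => disjoint_cylinder (hA i) (hB' j) (by simp)) ?_ ?_
  · rintro i _ ⟨w, hw, rfl⟩
    exact mul_mem_cylinder hp (ha i) (by simpa [invRev] using hw)
  · rintro i _ ⟨w, hw, rfl⟩
    refine mul_mem_cylinder hp (x := (a i)⁻¹) (A := invRev (B i)) (B := invRev (A i)) ?_
      (by simpa [invRev, comp_def] using hw)
    rw [toWord_inv, ha]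
    simp [invRev]

end Cylinders

end FreeGroup

theorem injective_length_sumElim {κ₁ κ₂ β γ : Type*} {f₁ : κ₁ → List β} {f₂ : κ₂ → List β}
    {x y : γ} (h₁ : Injective fun i => (f₁ i).length) (h₂ : Injective fun i => (f₂ i).length)
    (hxy : x ≠ y) :
    Injective fun i => ((Sum.elim f₁ f₂ i).length, Sum.elim (fun _ => x) (fun _ => y) i) := by
  have hsplit : (fun i => ((Sum.elim f₁ f₂ i).length, Sum.elim (fun _ => x) (fun _ => y) i)) =
      Sum.elim (fun i => ((f₁ i).length, x)) (fun i => ((f₂ i).length, y)) := by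
    funext i; cases i <;> rfl
  rw [hsplit]
  exact Injective.sumElim (fun i j hij => h₁ (congrArg Prod.fst hij))
    (fun i j hij => h₂ (congrArg Prod.fst hij)) fun _ _ hxy' => hxy (congrArg Prod.snd hxy')

namespace Stmt1

theorem Alternating.isAlternating_append {w : F2} {d : Fin 2} {x : Fin 2 × Bool}
    (hw : Alternating w) (hend : EndsWith d w) (hx : d ≠ x.1) :
    FreeGroup.IsAlternating (w.toWord ++ [x]) := by
  refine hw.append (List.isChain_singleton x) fun y hy z hz => ?_
  obtain rfl : x = z := by simpa using hz
  rcases hend with hnil | hlast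
  · simp [hnil] at hy
  · rw [Option.mem_def] at hy
    simp_all

theorem Alternating.isAlternating_cons {w : F2} {d : Fin 2} {x : Fin 2 × Bool}
    (hw : Alternating w) (hstart : StartsWith d w) (hx : x.1 ≠ d) :
    FreeGroup.IsAlternating (x :: w.toWord) := by
  refine List.isChain_cons.2 ⟨fun y hy => ?_, hw⟩
  rcases hstart with hnil | hhead
  · simp [hnil] at hy
  · rw [Option.mem_def] at hy
    simp_all

theorem stmt_1 (p : ℕ) (hp : 3 ≤ p) (n₁ n₂ : ℕ)
    (v v' : Fin n₁ → F2) (u u' : Fin n₂ → F2)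
    (hv : ∀ i, Alternating (v i)) (hv' : ∀ i, Alternating (v' i))
    (hu : ∀ i, Alternating (u i)) (hu' : ∀ i, Alternating (u' i))
    (hvend : ∀ i, EndsWith 1 (v i)) (hv'start : ∀ i, StartsWith 1 (v' i))
    (huend : ∀ i, EndsWith 0 (u i)) (hu'start : ∀ i, StartsWith 0 (u' i))
    (hlv : StrictMono fun i => (v i).toWord.length)
    (hlv' : StrictMono fun i => (v' i).toWord.length)
    (hlu : StrictMono fun i => (u i).toWord.length)
    (hlu' : StrictMono fun i => (u' i).toWord.length) :
    ∀ w : FreeGroup (Fin n₁ ⊕ Fin n₂), w ≠ 1 →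
      FreeGroup.lift
        (Sum.elim (fun i => v i * g ^ p * v' i) (fun i => u i * h ^ p * u' i)) w ≠ 1 := by
  have hvA i : FreeGroup.IsAlternating ((v i).toWord ++ [(0, true)]) :=
    (hv i).isAlternating_append (hvend i) (by decide)
  have huA i : FreeGroup.IsAlternating ((u i).toWord ++ [(1, true)]) :=
    (hu i).isAlternating_append (huend i) (by decide)
  have hvB i : FreeGroup.IsAlternating ((0, true) :: (v' i).toWord) :=
    (hv' i).isAlternating_cons (hv'start i) (by decide)
  have huB i : FreeGroup.IsAlternating ((1, true) :: (u' i).toWord) :=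
    (hu' i).isAlternating_cons (hu'start i) (by decide)
  intro w hw
  refine (map_ne_one_iff _ (FreeGroup.injective_lift_of_toWord_eq_append_replicate_append hp _
    (Sum.elim (fun i => (v i).toWord) fun i => (u i).toWord)
    (Sum.elim (fun i => (v' i).toWord) fun i => (u' i).toWord)
    (Sum.elim (fun _ => 0) fun _ => 1) ?_ ?_ ?_ ?_ ?_)).2 hw
  · rintro (i | i)
    · exact FreeGroup.toWord_mul_of_pow_mul (by omega) (hvA i).isReduced (hvB i).isReduced
    · exact FreeGroup.toWord_mul_of_pow_mul (by omega) (huA i).isReduced (huB i).isReduced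
  · rintro (i | i)
    exacts [hvA i, huA i]
  · rintro (i | i)
    exacts [hvB i, huB i]
  · exact injective_length_sumElim hlv.injective hlu.injective (by decide)
  · exact injective_length_sumElim hlv'.injective hlu'.injective (by decide)

end Stmt1
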